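/- arXiv:0905.3998 — 8 statements merged into one kernel-verified Lean document; each statement's English description precedes it below -/
import Mathlib

section
/- Let A and B be interfaces and r ⊆ |A| × |B|. Then (a,b) ∈ (P_A ⊸ P_B)(r) if and only if for every x ⊆ |A|, a ∈ P_A(x) implies b ∈ P_B(⟨r⟩ x), where ⟨r⟩ x is the direct image of x along r. -/
/-- A (monotone) predicate transformer on a set together with its state space:
an *interface*. -/
structure Interface (α : Type*) where
  P : Set α → Set α
  mono : Monotone P

/-- A seed of an interface: a subset `x` with `x ⊆ P x`. -/
def Seed {α : Type*} (X : Interface α) (x : Set α) : Prop := x ⊆ X.P x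

/-- Direct image of a set along a relation. -/
def dimage {α β : Type*} (r : Set (α × β)) (x : Set α) : Set β :=
  {b | ∃ a ∈ x, (a, b) ∈ r}

/-- The dual interface: `P⊥ x = (P xᶜ)ᶜ`. -/
def Interface.dual {α : Type*} (X : Interface α) : Interface α where
  P x := (X.P xᶜ)ᶜ
  mono := fun x y hxy =>
    Set.compl_subset_compl.mpr (X.mono (Set.compl_subset_compl.mpr hxy))

/-- The tensor of two interfaces. -/
def Interface.tensor {α β : Type*} (X : Interface α) (Y : Interface β) :
    Interface (α × β) where
  P r := ⋃ (x : Set α) (y : Set β) (_ : x ×ˢ y ⊆ r), X.P x ×ˢ Y.P y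
  mono := by
    intro r s hrs p hp
    simp only [Set.mem_iUnion] at hp ⊢
    obtain ⟨x, y, hxy, hpx⟩ := hp
    exact ⟨x, y, hxy.trans hrs, hpx⟩

/-- The par of two interfaces: `X ⅋ Y = (X⊥ ⊗ Y⊥)⊥`. -/
def Interface.par {α β : Type*} (X : Interface α) (Y : Interface β) :
    Interface (α × β) :=
  (X.dual.tensor Y.dual).dual

/-- The linear arrow: `X ⊸ Y = X⊥ ⅋ Y`. -/
def Interface.lolli {α β : Type*} (X : Interface α) (Y : Interface β) :
    Interface (α × β) :=
  X.dual.par Y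

/-- The with of two interfaces, on the disjoint sum of the state spaces. -/
def Interface.wth {α β : Type*} (X : Interface α) (Y : Interface β) :
    Interface (α ⊕ β) where
  P z := Sum.inl '' X.P (Sum.inl ⁻¹' z) ∪ Sum.inr '' Y.P (Sum.inr ⁻¹' z)
  mono := by
    intro z w hzw
    exact Set.union_subset_union
      (Set.image_mono (X.mono (Set.preimage_mono hzw)))
      (Set.image_mono (Y.mono (Set.preimage_mono hzw)))

/-- `⋆ᵢ xᵢ` for a multiset of sets: the multisets obtained by picking one element
in each set (up to a bijective pairing). -/
def mstar {α : Type*} (S : Multiset (Set α)) : Set (Multiset α) :=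
  {m | Multiset.Rel (fun a x => a ∈ x) m S}

/-- The exponential `!X`: `[a₁,…,aₙ] ∈ !P(U)` iff there are sets `x₁,…,xₙ` with
`⋆ᵢ xᵢ ⊆ U` and `aᵢ ∈ P xᵢ` for all `i`. -/
def Interface.bang {α : Type*} (X : Interface α) : Interface (Multiset α) where
  P U := {m | ∃ S : Multiset (Set α),
    mstar S ⊆ U ∧ Multiset.Rel (fun a x => a ∈ X.P x) m S}
  mono := by
    intro U V hUV m hm
    obtain ⟨S, hS, hrel⟩ := hm
    exact ⟨S, hS.trans hUV, hrel⟩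

/-! Unfolding `⊸`, `(a, b) ∈ (P_A ⊸ P_B)(r)` says that `a ∈ P_A x` forces `b ∈ P_B z` whenever
`x ×ˢ zᶜ` misses `r`, i.e. whenever `⟨r⟩ x ⊆ z`; by monotonicity of `P_B` the smallest such `z`,
namely `⟨r⟩ x`, is the only one that matters. -/

namespace Interface

variable {α β : Type*}

@[simp] lemma dual_P (X : Interface α) (x : Set α) : X.dual.P x = (X.P xᶜ)ᶜ := rfl

lemma mem_tensor_P (X : Interface α) (Y : Interface β) (r : Set (α × β)) (p : α × β) :
    p ∈ (X.tensor Y).P r ↔ ∃ x y, x ×ˢ y ⊆ r ∧ p.1 ∈ X.P x ∧ p.2 ∈ Y.P y := by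
  simp only [tensor, Set.mem_iUnion, Set.mem_prod, exists_prop]

lemma mem_par_P (X : Interface α) (Y : Interface β) (r : Set (α × β)) (p : α × β) :
    p ∈ (X.par Y).P r ↔ ∀ x y, x ×ˢ y ⊆ rᶜ → p.1 ∈ X.P xᶜ ∨ p.2 ∈ Y.P yᶜ := by
  simp only [par, dual_P, Set.mem_compl_iff, mem_tensor_P, not_exists, not_and, not_not,
    or_iff_not_imp_left]

lemma mem_lolli_P (X : Interface α) (Y : Interface β) (r : Set (α × β)) (p : α × β) :
    p ∈ (X.lolli Y).P r ↔ ∀ x y, x ×ˢ y ⊆ rᶜ → p.1 ∈ X.P x → p.2 ∈ Y.P yᶜ := by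
  simp only [lolli, mem_par_P, dual_P, compl_compl, Set.mem_compl_iff, or_iff_not_imp_left,
    not_not]

end Interface

lemma prod_subset_compl_iff_dimage_subset_compl {α β : Type*} {r : Set (α × β)}
    {x : Set α} {y : Set β} : x ×ˢ y ⊆ rᶜ ↔ dimage r x ⊆ yᶜ := by
  constructor
  · rintro h b ⟨a, ha, hab⟩ hb
    exact h ⟨ha, hb⟩ hab
  · rintro h ⟨a, b⟩ ⟨ha, hb⟩ hab
    exact h ⟨a, ha, hab⟩ hb

/-- `(a,b) ∈ (P_A ⊸ P_B)(r)` iff for every `x`, `a ∈ P_A x`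
implies `b ∈ P_B (⟨r⟩ x)`. -/
theorem mem_lolli_iff {α β : Type*} (A : Interface α) (B : Interface β)
    (r : Set (α × β)) (a : α) (b : β) :
    (a, b) ∈ (A.lolli B).P r ↔ ∀ x : Set α, a ∈ A.P x → b ∈ B.P (dimage r x) := by
  simp only [Interface.mem_lolli_P, prod_subset_compl_iff_dimage_subset_compl]
  refine ⟨fun h x hx => ?_, fun h x y hxy hx => B.mono hxy (h x hx)⟩
  simpa using h x (dimage r x)ᶜ (by rw [compl_compl]) hx
end

section
/- Let A and B be interfaces. If x is a seed of A and y is a seed of B, then the rectangle x × y is a seed of A ⅋ B. -/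
namespace Interface

variable {α β : Type*}

theorem mem_par_P_iff (A : Interface α) (B : Interface β) (r : Set (α × β)) (a : α) (b : β) :
    (a, b) ∈ (A.par B).P r ↔ ∀ u v, u ×ˢ v ⊆ rᶜ → a ∈ A.P uᶜ ∨ b ∈ B.P vᶜ := by
  simp only [par, dual, tensor, Set.mem_compl_iff, Set.mem_iUnion, Set.mem_prod,
    not_exists, not_and_or, not_not]

/-- A rectangle `u ×ˢ v` avoiding `x ×ˢ y` avoids `x` or `y` in one coordinate, and
monotonicity then carries `a ∈ A.P x` or `b ∈ B.P y` over to `uᶜ` or `vᶜ`. -/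
theorem prod_subset_par_P (A : Interface α) (B : Interface β) (x : Set α) (y : Set β) :
    A.P x ×ˢ B.P y ⊆ (A.par B).P (x ×ˢ y) := by
  rintro ⟨a, b⟩ ⟨ha, hb⟩
  rw [mem_par_P_iff]
  intro u v huv
  rcases Set.disjoint_prod.mp (Set.subset_compl_iff_disjoint_right.mp huv) with hux | hvy
  · exact .inl (A.mono hux.subset_compl_left ha)
  · exact .inr (B.mono hvy.subset_compl_left hb)

end Interface

/-- a rectangle of seeds is a seed of the par. -/
theorem seed_par_of_seeds {α β : Type*} (A : Interface α) (B : Interface β)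
    (x : Set α) (y : Set β) (hx : Seed A x) (hy : Seed B y) :
    Seed (A.par B) (x ×ˢ y) :=
  (Set.prod_mono hx hy).trans (A.prod_subset_par_P B x y)
end

section
/- Let X, Y, Z be interfaces. If r is a seed of X ⊸ Y and r' is a seed of Y ⊸ Z, then the relational composition r'·r = {(a,c) | ∃ b, (a,b) ∈ r and (b,c) ∈ r'} is a seed of X ⊸ Z. (Soundness of the cut rule; this makes interfaces and linear arrows into a category.) -/
/-!
Unfolding the two dualities, `(a, b) ∈ P_{X ⊸ Y}(r)` says that `a ∈ P_X x` implies
`b ∈ P_Y y` for every `y` containing the direct image `r[x]`; by monotonicity of `P_Y` it suffices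
to take `y = r[x]`. Read this way, cut is the composition of two such implications, since
`(r' · r)[x] = r'[r[x]]`.
-/

section dimage

variable {α β γ : Type*}

lemma dimage_subset_compl_iff {r : Set (α × β)} {x : Set α} {y : Set β} :
    dimage r x ⊆ yᶜ ↔ x ×ˢ y ⊆ rᶜ := by
  simp only [dimage, Set.subset_def, Set.mem_compl_iff, Set.mem_prod, Prod.forall]
  grind

lemma dimage_comp (r : Set (α × β)) (r' : Set (β × γ)) (x : Set α) :
    dimage {p : α × γ | ∃ b, (p.1, b) ∈ r ∧ (b, p.2) ∈ r'} x = dimage r' (dimage r x) :=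
  SetRel.image_comp r r' x

end dimage

namespace Interface

variable {α β : Type*} {X : Interface α} {Y : Interface β} {r : Set (α × β)} {p : α × β}

lemma mem_lolli_P_iff_forall_prod :
    p ∈ (X.lolli Y).P r ↔ ∀ x y, x ×ˢ y ⊆ rᶜ → p.1 ∈ X.P x → p.2 ∈ Y.P yᶜ := by
  simp only [lolli, par, dual, tensor, Set.mem_compl_iff, Set.mem_iUnion, not_exists,
    compl_compl, Set.mem_prod, not_and, not_not]

lemma mem_lolli_P_iff : p ∈ (X.lolli Y).P r ↔ ∀ x, p.1 ∈ X.P x → p.2 ∈ Y.P (dimage r x) := by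
  rw [mem_lolli_P_iff_forall_prod]
  constructor
  · intro h x hx
    simpa using h x (dimage r x)ᶜ (dimage_subset_compl_iff.1 (compl_compl _).ge) hx
  · intro h x y hxy hx
    exact Y.mono (dimage_subset_compl_iff.2 hxy) (h x hx)

end Interface

/-- soundness of cut: relational composition of linear arrows is a
linear arrow. -/
theorem comp_seed_lolli {α β γ : Type*}
    (X : Interface α) (Y : Interface β) (Z : Interface γ)
    (r : Set (α × β)) (r' : Set (β × γ))
    (hr : Seed (X.lolli Y) r) (hr' : Seed (Y.lolli Z) r') :
    Seed (X.lolli Z) {p : α × γ | ∃ b, (p.1, b) ∈ r ∧ (b, p.2) ∈ r'} := by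
  rintro ⟨a, c⟩ ⟨b, hab, hbc⟩
  refine Interface.mem_lolli_P_iff.2 fun x ha => ?_
  rw [dimage_comp]
  exact Interface.mem_lolli_P_iff.1 (hr' hbc) _ (Interface.mem_lolli_P_iff.1 (hr hab) x ha)
end

section
/- Let X and Y be interfaces and let r be a seed of X ⊸ Y. Then the direct image along the converse relation, ⟨r^∼⟩, maps seeds of Y⊥ (antiseeds of Y) to seeds of X⊥ (antiseeds of X). -/
theorem Interface.dual_dual {α : Type*} (X : Interface α) : X.dual.dual = X := by
  cases X
  simp only [Interface.dual, compl_compl]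

theorem Interface.lolli_P {α β : Type*} (X : Interface α) (Y : Interface β) (r : Set (α × β)) :
    (X.lolli Y).P r = (⋃ (x : Set α) (y : Set β) (_ : x ×ˢ y ⊆ rᶜ), X.P x ×ˢ Y.dual.P y)ᶜ := by
  rw [Interface.lolli, Interface.par, Interface.dual_dual]
  rfl

theorem Interface.notMem_lolli_P {α β : Type*} (X : Interface α) (Y : Interface β)
    {r : Set (α × β)} {x : Set α} {y : Set β} (hxy : x ×ˢ y ⊆ rᶜ) {a : α} {b : β}
    (ha : a ∈ X.P x) (hb : b ∈ Y.dual.P y) : (a, b) ∉ (X.lolli Y).P r := by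
  rw [Interface.lolli_P, Set.notMem_compl_iff, Set.mem_iUnion₂]
  exact ⟨x, y, Set.mem_iUnion.2 ⟨hxy, ha, hb⟩⟩

theorem compl_dimage_prod_subset {α β : Type*} (s : Set (β × α)) (y : Set β) :
    (dimage s y)ᶜ ×ˢ y ⊆ {p : α × β | (p.2, p.1) ∈ s}ᶜ :=
  fun _ ⟨ha, hb⟩ hs => ha ⟨_, hb, hs⟩

/-- the direct image along the converse of a linear arrow maps
antiseeds of `Y` to antiseeds of `X`. -/
theorem converse_dimage_antiseeds {α β : Type*} (X : Interface α) (Y : Interface β)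
    (r : Set (α × β)) (hr : Seed (X.lolli Y) r) :
    ∀ y : Set β, Seed Y.dual y →
      Seed X.dual (dimage {p : β × α | (p.2, p.1) ∈ r} y) := by
  rintro y hy a ⟨b, hb, hab⟩ ha
  -- The complement of the image and the antiseed `y` span a rectangle disjoint from `r`,
  -- so no pair of `r` can lie in `X.P` of the one times `Y⊥.P` of the other.
  exact X.notMem_lolli_P Y (compl_dimage_prod_subset _ y) ha (hy hb) (hr hab)
end

section
/- Let A be an interface, U ⊆ Mulf(|A|), and l, l' finite multisets over |A|. Then l + l' ∈ !P_A(U) if and only if there exist V, V' ⊆ Mulf(|A|) with V ⋆ V' ⊆ U such that l ∈ !P_A(V) and l' ∈ !P_A(V'), where V ⋆ V' = {v + v' | v ∈ V, v' ∈ V'}. -/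
open Pointwise

/-! A pairing of `l + l'` with a multiset of sets splits into pairings of `l` and of `l'`, and
`⋆` sends sums of multisets of sets to pointwise sums of sets; so the witnesses of
`l + l' ∈ !P(U)` are exactly the sums of witnesses for `l` and for `l'`. -/

theorem Set.setOf_exists_eq_add {M : Type*} [Add M] (V V' : Set M) :
    {w : M | ∃ v ∈ V, ∃ v' ∈ V', w = v + v'} = V + V' := by
  ext w
  simp only [Set.mem_ofPred_eq, Set.mem_add, eq_comm]

theorem mstar_add {α : Type*} (S S' : Multiset (Set α)) :
    mstar (S + S') = mstar S + mstar S' := by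
  ext m
  simp only [mstar, Set.mem_ofPred_eq, Multiset.rel_add_right, Set.mem_add, eq_comm,
    exists_and_left]

/-- `l + l' ∈ !P_A(U)` iff there are `V, V'` with `V ⋆ V' ⊆ U`,
`l ∈ !P_A(V)` and `l' ∈ !P_A(V')`. -/
theorem add_mem_bang_iff {α : Type*} (A : Interface α)
    (U : Set (Multiset α)) (l l' : Multiset α) :
    l + l' ∈ A.bang.P U ↔
      ∃ V V' : Set (Multiset α),
        {w : Multiset α | ∃ v ∈ V, ∃ v' ∈ V', w = v + v'} ⊆ U ∧
        l ∈ A.bang.P V ∧ l' ∈ A.bang.P V' := by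
  simp only [Set.setOf_exists_eq_add]
  constructor
  · rintro ⟨S, hS, hrel⟩
    obtain ⟨S₁, S₂, h₁, h₂, rfl⟩ := Multiset.rel_add_left.mp hrel
    exact ⟨mstar S₁, mstar S₂, mstar_add S₁ S₂ ▸ hS, ⟨S₁, subset_rfl, h₁⟩, ⟨S₂, subset_rfl, h₂⟩⟩
  · rintro ⟨V, V', hU, ⟨S, hS, h⟩, ⟨S', hS', h'⟩⟩
    refine ⟨S + S', ?_, h.add h'⟩
    calc mstar (S + S') = mstar S + mstar S' := mstar_add S S'
      _ ⊆ V + V' := Set.add_subset_add hS hS'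
      _ ⊆ U := hU
end

section
/- For all interfaces X and Y, !(X & Y) = !X ⊗ !Y: under the canonical bijection Mulf(|X| + |Y|) ≅ Mulf(|X|) × Mulf(|Y|) (splitting a multiset over a disjoint sum into its two components), the predicate transformer !(P_X & P_Y) is identified with P_{!X} ⊗ P_{!Y}. Explicitly, for R ⊆ Mulf(|X|) × Mulf(|Y|) and multisets l_X over |X| and l_Y over |Y|, the pair (l_X, l_Y) (viewed as a multiset over |X|+|Y|) lies in !(P_X & P_Y)(R) if and only if (l_X, l_Y) ∈ (!P_X ⊗ !P_Y)(R). -/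
/-- The canonical injection `Mulf(|X|) × Mulf(|Y|) → Mulf(|X| + |Y|)` (the inverse
of the canonical bijection splitting a multiset over a disjoint sum). -/
def glue {α β : Type*} (p : Multiset α × Multiset β) : Multiset (α ⊕ β) :=
  p.1.map Sum.inl + p.2.map Sum.inr

/-!
Both sides reduce to the same condition on a pair of witness families `SX`, `SY`.
On the `!X ⊗ !Y` side the sets `x`, `y` may be shrunk to `⋆ SX` and `⋆ SY`. On the
`!(X & Y)` side a witness family splits along the two components of `glue (lX, lY)`,
and replacing each set `z` by `inl '' (inl ⁻¹' z)` or `inr '' (inr ⁻¹' z)` only shrinks `⋆`;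
for witnesses of that form, `⋆` is exactly `glue '' (⋆ SX ×ˢ ⋆ SY)`.
-/

open Multiset

theorem Multiset.exists_map_eq_of_rel_mem_image {α β : Type*} {f : α → β} {m : Multiset β}
    {S : Multiset (Set α)} (h : Rel (fun b x => b ∈ f '' x) m S) :
    ∃ m' : Multiset α, m'.map f = m ∧ Rel (· ∈ ·) m' S := by
  induction h with
  | zero => exact ⟨0, rfl, .zero⟩
  | cons hb _ ih =>
    obtain ⟨a, ha, rfl⟩ := hb
    obtain ⟨m', rfl, hm'⟩ := ih
    exact ⟨a ::ₘ m', map_cons _ _ _, hm'.cons ha⟩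

section Glue

variable {α β : Type*}

theorem filterMap_getLeft?_glue (p : Multiset α × Multiset β) :
    (glue p).filterMap Sum.getLeft? = p.1 := by
  simp [glue, filterMap_add, filterMap_map, Function.comp_def, eq_zero_iff_forall_notMem]

theorem filterMap_getRight?_glue (p : Multiset α × Multiset β) :
    (glue p).filterMap Sum.getRight? = p.2 := by
  simp [glue, filterMap_add, filterMap_map, Function.comp_def, eq_zero_iff_forall_notMem]

theorem glue_injective : Function.Injective (glue (α := α) (β := β)) := fun p q h =>
  Prod.ext (by rw [← filterMap_getLeft?_glue p, h, filterMap_getLeft?_glue])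
    (by rw [← filterMap_getRight?_glue p, h, filterMap_getRight?_glue])

theorem mstar_map_add_map_subset {f g : Set α → Set α} (hf : ∀ x, f x ⊆ x) (hg : ∀ x, g x ⊆ x)
    (S T : Multiset (Set α)) : mstar (S.map f + T.map g) ⊆ mstar (S + T) := fun _ h => by
  obtain ⟨m, n, hm, hn, rfl⟩ := rel_add_right.mp h
  exact ((rel_map_right.mp hm).mono fun _ _ x _ ha => hf x ha).add
    ((rel_map_right.mp hn).mono fun _ _ x _ ha => hg x ha)

theorem mstar_map_inl_add_map_inr (SX : Multiset (Set α)) (SY : Multiset (Set β)) :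
    mstar (SX.map (Sum.inl '' ·) + SY.map (Sum.inr '' ·)) = glue '' (mstar SX ×ˢ mstar SY) := by
  ext m
  constructor
  · intro hm
    obtain ⟨mX, mY, hmX, hmY, rfl⟩ := rel_add_right.mp hm
    obtain ⟨lX, rfl, hlX⟩ := exists_map_eq_of_rel_mem_image (rel_map_right.mp hmX)
    obtain ⟨lY, rfl, hlY⟩ := exists_map_eq_of_rel_mem_image (rel_map_right.mp hmY)
    exact ⟨(lX, lY), ⟨hlX, hlY⟩, rfl⟩
  · rintro ⟨⟨lX, lY⟩, ⟨hlX, hlY⟩, rfl⟩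
    exact (rel_map.mpr (hlX.mono fun _ _ _ _ => Set.mem_image_of_mem _)).add
      (rel_map.mpr (hlY.mono fun _ _ _ _ => Set.mem_image_of_mem _))

end Glue

namespace Interface

variable {α β : Type*} (X : Interface α) (Y : Interface β)

@[simp]
theorem inl_mem_wth_P {a : α} {z : Set (α ⊕ β)} :
    Sum.inl a ∈ (X.wth Y).P z ↔ a ∈ X.P (Sum.inl ⁻¹' z) := by
  simp [wth]

@[simp]
theorem inr_mem_wth_P {b : β} {z : Set (α ⊕ β)} :
    Sum.inr b ∈ (X.wth Y).P z ↔ b ∈ Y.P (Sum.inr ⁻¹' z) := by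
  simp [wth]

theorem glue_mem_bang_wth_P {lX : Multiset α} {lY : Multiset β} {U : Set (Multiset (α ⊕ β))} :
    glue (lX, lY) ∈ (X.wth Y).bang.P U ↔ ∃ (SX : Multiset (Set α)) (SY : Multiset (Set β)),
      mstar (SX.map (Sum.inl '' ·) + SY.map (Sum.inr '' ·)) ⊆ U ∧
        Rel (fun a x => a ∈ X.P x) lX SX ∧ Rel (fun b y => b ∈ Y.P y) lY SY := by
  constructor
  · rintro ⟨S, hSU, hS⟩
    obtain ⟨SX, SY, hSX, hSY, rfl⟩ := rel_add_left.mp hS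
    refine ⟨SX.map (Sum.inl ⁻¹' ·), SY.map (Sum.inr ⁻¹' ·), ?_, ?_, ?_⟩
    · simp only [map_map, Function.comp_def]
      exact (mstar_map_add_map_subset (fun _ => Set.image_preimage_subset _ _)
        (fun _ => Set.image_preimage_subset _ _) SX SY).trans hSU
    · simpa [rel_map_left, rel_map_right] using hSX
    · simpa [rel_map_left, rel_map_right] using hSY
  · rintro ⟨SX, SY, hSU, hSX, hSY⟩
    refine ⟨_, hSU, (rel_map.mpr (hSX.mono fun _ _ _ _ ha => ?_)).add
      (rel_map.mpr (hSY.mono fun _ _ _ _ hb => ?_))⟩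
    · simpa [Set.preimage_image_eq _ Sum.inl_injective] using ha
    · simpa [Set.preimage_image_eq _ Sum.inr_injective] using hb

theorem mem_tensor_bang_P {lX : Multiset α} {lY : Multiset β} {R : Set (Multiset α × Multiset β)} :
    (lX, lY) ∈ (X.bang.tensor Y.bang).P R ↔ ∃ (SX : Multiset (Set α)) (SY : Multiset (Set β)),
      mstar SX ×ˢ mstar SY ⊆ R ∧
        Rel (fun a x => a ∈ X.P x) lX SX ∧ Rel (fun b y => b ∈ Y.P y) lY SY := by
  simp only [tensor, Set.mem_iUnion, Set.mem_prod]
  constructor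
  · rintro ⟨x, y, hxy, ⟨SX, hSX, hlX⟩, ⟨SY, hSY, hlY⟩⟩
    exact ⟨SX, SY, (Set.prod_mono hSX hSY).trans hxy, hlX, hlY⟩
  · rintro ⟨SX, SY, hR, hlX, hlY⟩
    exact ⟨_, _, hR, ⟨SX, subset_rfl, hlX⟩, ⟨SY, subset_rfl, hlY⟩⟩

end Interface

/-- `!(X & Y) = !X ⊗ !Y` under the canonical identification
`Mulf(|X| + |Y|) ≅ Mulf(|X|) × Mulf(|Y|)`. -/
theorem bang_with_eq_tensor_bang {α β : Type*} (X : Interface α) (Y : Interface β)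
    (R : Set (Multiset α × Multiset β)) (lX : Multiset α) (lY : Multiset β) :
    glue (lX, lY) ∈ (X.wth Y).bang.P (glue '' R) ↔
      (lX, lY) ∈ ((X.bang).tensor (Y.bang)).P R := by
  simp only [Interface.glue_mem_bang_wth_P, Interface.mem_tensor_bang_P,
    mstar_map_inl_add_map_inr, Set.image_subset_image_iff glue_injective]
end

section
/- If the predicate transformer of an interface X is the identity on Set(|X|), then the predicate transformer of !X is the identity on Set(Mulf(|X|)): for every U ⊆ Mulf(|X|), !Id(U) = U. (This is the exponential case of the proposition that every interface interpreting a closed linear formula has identity predicate transformer.) -/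
theorem mstar_map_singleton {α : Type*} (m : Multiset α) :
    mstar (m.map fun a => ({a} : Set α)) = {m} := by
  ext m'
  simp only [mstar, Set.mem_ofPred_eq, Multiset.rel_map_right, Set.mem_singleton_iff,
    Multiset.rel_eq]

theorem exists_mstar_subset_and_mem_iff {α : Type*} {U : Set (Multiset α)}
    {m : Multiset α} : (∃ S, mstar S ⊆ U ∧ m ∈ mstar S) ↔ m ∈ U :=
  ⟨fun ⟨_, hSU, hmS⟩ => hSU hmS,
    fun hm => ⟨_, (mstar_map_singleton m).subset.trans (Set.singleton_subset_iff.mpr hm),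
      (mstar_map_singleton m).superset rfl⟩⟩

/-- if the predicate transformer of `X` is the identity, then so is
that of `!X`. -/
theorem bang_id {α : Type*} (X : Interface α) (h : ∀ x : Set α, X.P x = x) :
    ∀ U : Set (Multiset α), X.bang.P U = U := by
  intro U
  ext m
  simp only [Interface.bang, h, Set.mem_ofPred_eq]
  exact exists_mstar_subset_and_mem_iff
end

section
/- Let X be the 'switch' interface with state space {−, +} and predicate transformer P given by P(∅) = ∅, P({−,+}) = {−,+}, P({+}) = {−}, and P({−}) = {+}. Then: (i) P⊥ = P; (ii) P ∘ P is the identity on Set({−,+}); (iii) the seeds of X are exactly ∅ and {−,+}; (iv) the relation {(+,−), (−,+)} is a seed of X ⊗ X. In particular, a seed of a tensor product need not contain a product of seeds. -/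
/-! Monotonicity and the values on singletons force the switch to be `x ↦ not ⁻¹' x`: if `!b ∈ x`
then `b ∈ P {!b} ⊆ P x`, and otherwise `x ⊆ {b}`, so `P x ⊆ P {b} = {!b}`. An interface given by
the preimage along an involution `σ` commutes with complements, squares to the identity, has as
seeds exactly the `σ`-invariant sets, and the graph of `σ` is a seed of its tensor square, covered
by the rectangles `{σ a} × {a}`. -/

open Function

namespace Interface

section Preimage

variable {α : Type*} {X : Interface α} {σ : α → α}

theorem dual_P_eq_of_P_eq_preimage (hX : ∀ x, X.P x = σ ⁻¹' x) (x : Set α) :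
    X.dual.P x = X.P x := by
  simp only [Interface.dual, hX, Set.preimage_compl, compl_compl]

theorem P_P_eq_of_P_eq_preimage (hσ : Involutive σ) (hX : ∀ x, X.P x = σ ⁻¹' x) (x : Set α) :
    X.P (X.P x) = x := by
  rw [hX, hX, ← Set.preimage_comp, hσ.comp_self, Set.preimage_id]

theorem seed_iff_preimage_eq (hσ : Involutive σ) (hX : ∀ x, X.P x = σ ⁻¹' x) (x : Set α) :
    Seed X x ↔ σ ⁻¹' x = x := by
  rw [Seed, hX]
  refine ⟨fun hx => le_antisymm ?_ hx, fun hx => hx.symm.subset⟩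
  calc σ ⁻¹' x ⊆ σ ⁻¹' (σ ⁻¹' x) := Set.preimage_mono hx
    _ = x := by rw [← Set.preimage_comp, hσ.comp_self, Set.preimage_id]

theorem seed_tensor_graph_of_P_eq_preimage (hσ : Involutive σ) (hX : ∀ x, X.P x = σ ⁻¹' x) :
    Seed (X.tensor X) {p | p.2 = σ p.1} := by
  rintro ⟨a, b⟩ (hb : b = σ a)
  subst hb
  simp only [Interface.tensor, Set.mem_iUnion]
  refine ⟨{σ a}, {a}, ?_, ?_⟩
  · rintro ⟨c, d⟩ ⟨hc : c = σ a, hd : d = a⟩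
    simp only [Set.mem_ofPred_eq, hc, hd, hσ a]
  · simp [hX, hσ a]

end Preimage

theorem P_eq_preimage_not (X : Interface Bool)
    (hp : X.P {true} = {false}) (hm : X.P {false} = {true}) (x : Set Bool) :
    X.P x = not ⁻¹' x := by
  have hsingleton : ∀ a, X.P {a} = {!a} := by
    rintro (_ | _)
    exacts [hm, hp]
  ext b
  constructor
  · intro hb
    by_contra hnb
    have hxb : x ⊆ {b} := fun c hc =>
      (Bool.eq_or_eq_not c b).resolve_right fun hcb => hnb (show (!b) ∈ x from hcb ▸ hc)
    have := X.mono hxb hb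
    simp [hsingleton] at this
  · intro hb
    have hmono : X.P {!b} ⊆ X.P x := X.mono (Set.singleton_subset_iff.2 hb)
    exact hmono (by rw [hsingleton, Bool.not_not]; rfl)

end Interface

theorem Bool.preimage_not_eq_self_iff (x : Set Bool) :
    not ⁻¹' x = x ↔ x = ∅ ∨ x = Set.univ := by
  refine ⟨fun hx => ?_, by rintro (rfl | rfl) <;> rfl⟩
  rcases x.eq_empty_or_nonempty with hempty | ⟨a, ha⟩
  · exact Or.inl hempty
  · refine Or.inr (Set.eq_univ_of_forall fun b => ?_)
    rcases Bool.eq_or_eq_not b a with rfl | rfl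
    exacts [ha, show a ∈ not ⁻¹' x from hx.symm ▸ ha]

theorem switch_interface_general (X : Interface Bool)
    (hp : X.P {true} = {false}) (hm : X.P {false} = {true}) :
    (∀ x : Set Bool, X.dual.P x = X.P x) ∧
    (∀ x : Set Bool, X.P (X.P x) = x) ∧
    (∀ x : Set Bool, Seed X x ↔ x = ∅ ∨ x = Set.univ) ∧
    Seed (X.tensor X) ({(true, false), (false, true)} : Set (Bool × Bool)) := by
  have hX := X.P_eq_preimage_not hp hm
  have hgraph : ({(true, false), (false, true)} : Set (Bool × Bool)) = {p | p.2 = !p.1} := by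
    ext ⟨a, b⟩; cases a <;> cases b <;> simp
  refine ⟨Interface.dual_P_eq_of_P_eq_preimage hX,
    Interface.P_P_eq_of_P_eq_preimage Bool.involutive_not hX, fun x => ?_, ?_⟩
  · rw [Interface.seed_iff_preimage_eq Bool.involutive_not hX, Bool.preimage_not_eq_self_iff]
  · rw [hgraph]
    exact Interface.seed_tensor_graph_of_P_eq_preimage Bool.involutive_not hX

/-- properties of the "switch" interface on `{−,+}` (coded as
`Bool`, with `+` as `true` and `−` as `false`): it is self-dual, an involution,
its only seeds are `∅` and the whole space, and `{(+,−),(−,+)}` is a seed of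
`X ⊗ X`. -/
theorem switch_interface (X : Interface Bool)
    (h0 : X.P ∅ = ∅) (h1 : X.P Set.univ = Set.univ)
    (hp : X.P {true} = {false}) (hm : X.P {false} = {true}) :
    (∀ x : Set Bool, X.dual.P x = X.P x) ∧
    (∀ x : Set Bool, X.P (X.P x) = x) ∧
    (∀ x : Set Bool, Seed X x ↔ x = ∅ ∨ x = Set.univ) ∧
    Seed (X.tensor X) ({(true, false), (false, true)} : Set (Bool × Bool)) :=
  switch_interface_general X hp hm
end
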